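/- Let n ∈ ℕ, n−1 < α ≤ n, let I ⊆ ℝ be an open interval, f : I → (0,∞) smooth, and g(x) = f'(x)/2. Suppose u, v : I × (0,∞) → ℝ are continuously differentiable in x, for each x the Riemann–Liouville derivatives of order α of t ↦ u(x,t) and t ↦ v(x,t) exist, and (u,v) satisfies the time-fractional telegraph system ∂^α_t u = ∂_x v, ∂^α_t v = f(x) ∂_x u + (f'(x)/2) u on I × (0,∞). Then the pair ũ(x,t) = v(x,t)/√(f(x)), ṽ(x,t) = √(f(x)) · u(x,t) also satisfies the same system on I × (0,∞). -/

import Mathlib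

open MeasureTheory Real Set

noncomputable section

/-- The Riemann–Liouville kernel: for `α = n` it is `h` itself; for `n - 1 < α < n`
it is the fractional integral of order `n - α` of `h`. -/
def rlKernel (n : ℕ) (α : ℝ) (h : ℝ → ℝ) : ℝ → ℝ :=
  if α = (n : ℝ) then h
  else fun t => (Real.Gamma ((n : ℝ) - α))⁻¹ *
    ∫ s in (0:ℝ)..t, h s * (t - s) ^ ((n : ℝ) - α - 1)

/-- The Riemann–Liouville fractional derivative of order `α` (with `n - 1 < α ≤ n`). -/
def rlDeriv (n : ℕ) (α : ℝ) (h : ℝ → ℝ) : ℝ → ℝ :=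
  iteratedDeriv n (rlKernel n α h)

/-- The Riemann–Liouville derivative of order `α` of `h` exists on `(0, ∞)`. -/
def HasRLDerivOn (n : ℕ) (α : ℝ) (h : ℝ → ℝ) : Prop :=
  ContDiffOn ℝ n (rlKernel n α h) (Set.Ioi 0)
lemma iteratedDeriv_const_mul'' (n : ℕ) (c : ℝ) (g : ℝ → ℝ) :
    iteratedDeriv n (fun x => c * g x) = fun x => c * iteratedDeriv n g x := by
  induction n generalizing g with
  | zero => simp [iteratedDeriv_zero]
  | succ n ih =>
    rw [iteratedDeriv_succ', iteratedDeriv_succ']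
    have : deriv (fun x => c * g x) = fun x => c * deriv g x := by
      funext x; exact deriv_const_mul_field c
    rw [this, ih]

lemma rlKernel_const_mul (n : ℕ) (α : ℝ) (c : ℝ) (h : ℝ → ℝ) :
    rlKernel n α (fun s => c * h s) = fun t => c * rlKernel n α h t := by
  unfold rlKernel
  split_ifs with h1
  · rfl
  · funext t
    simp_rw [mul_assoc c, intervalIntegral.integral_const_mul]
    ring

lemma rlDeriv_const_mul (n : ℕ) (α : ℝ) (c : ℝ) (h : ℝ → ℝ) (t : ℝ) :
    rlDeriv n α (fun s => c * h s) t = c * rlDeriv n α h t := by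
  unfold rlDeriv
  rw [rlKernel_const_mul, iteratedDeriv_const_mul'']

/-- If `(u, v)` solves the time-fractional telegraph system
`∂ᵅₜ u = vₓ`, `∂ᵅₜ v = f uₓ + (f'/2) u` on `I × (0,∞)`, then so does
`(ũ, ṽ) = (v/√f, √f · u)` (the finite form of the symmetry `X₆`). -/
theorem fractional_telegraph_X6_symmetry
    (n : ℕ) (α : ℝ) (hn : (n : ℝ) - 1 < α) (hα : α ≤ n)
    (I : Set ℝ) (hI : IsOpen I) (hIc : I.OrdConnected)
    (f : ℝ → ℝ) (hfpos : ∀ x ∈ I, 0 < f x) (hfs : ContDiffOn ℝ (⊤ : ℕ∞) f I)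
    (u v : ℝ → ℝ → ℝ)
    (huC1 : ∀ t ∈ Set.Ioi (0:ℝ), ContDiffOn ℝ 1 (fun x => u x t) I)
    (hvC1 : ∀ t ∈ Set.Ioi (0:ℝ), ContDiffOn ℝ 1 (fun x => v x t) I)
    (huRL : ∀ x ∈ I, HasRLDerivOn n α (fun t => u x t))
    (hvRL : ∀ x ∈ I, HasRLDerivOn n α (fun t => v x t))
    (hsys : ∀ x ∈ I, ∀ t ∈ Set.Ioi (0:ℝ),
      rlDeriv n α (fun s => u x s) t = deriv (fun y => v y t) x ∧
      rlDeriv n α (fun s => v x s) t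
        = f x * deriv (fun y => u y t) x + deriv f x / 2 * u x t) :
    ∀ x ∈ I, ∀ t ∈ Set.Ioi (0:ℝ),
      rlDeriv n α (fun s => v x s / Real.sqrt (f x)) t
        = deriv (fun y => Real.sqrt (f y) * u y t) x ∧
      rlDeriv n α (fun s => Real.sqrt (f x) * u x s) t
        = f x * deriv (fun y => v y t / Real.sqrt (f y)) x
          + deriv f x / 2 * (v x t / Real.sqrt (f x)) := by
  intro x hx t ht
  have hfx : 0 < f x := hfpos x hx
  set s := Real.sqrt (f x) with hs
  have hs0 : s ≠ 0 := ne_of_gt (Real.sqrt_pos.mpr hfx)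
  have hs2 : s * s = f x := Real.mul_self_sqrt hfx.le
  have hxn : I ∈ nhds x := hI.mem_nhds hx
  have hfd : HasDerivAt f (deriv f x) x :=
    (((hfs.differentiableOn (by norm_num)).differentiableAt hxn)).hasDerivAt
  have hsf : HasDerivAt (fun y => Real.sqrt (f y)) (deriv f x / (2 * s)) x :=
    hfd.sqrt hfx.ne'
  have hud : HasDerivAt (fun y => u y t) (deriv (fun y => u y t) x) x :=
    ((((huC1 t ht).differentiableOn one_ne_zero).differentiableAt hxn)).hasDerivAt
  have hvd : HasDerivAt (fun y => v y t) (deriv (fun y => v y t) x) x :=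
    ((((hvC1 t ht).differentiableOn one_ne_zero).differentiableAt hxn)).hasDerivAt
  obtain ⟨h1, h2⟩ := hsys x hx t ht
  -- derivative of √f · u
  have hD1 : deriv (fun y => Real.sqrt (f y) * u y t) x
      = deriv f x / (2 * s) * u x t + s * deriv (fun y => u y t) x :=
    (hsf.mul hud).deriv
  -- derivative of v / √f
  have hD2 : deriv (fun y => v y t / Real.sqrt (f y)) x
      = (deriv (fun y => v y t) x * s - v x t * (deriv f x / (2 * s))) / (s * s) := by
    have := (hvd.div hsf hs0).deriv
    rw [show (fun y => v y t / Real.sqrt (f y)) = (fun y => v y t) / (fun y => Real.sqrt (f y)) from rfl, this, ← hs]; ring_nf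
  constructor
  · have : rlDeriv n α (fun s' => v x s' / s) t = s⁻¹ * rlDeriv n α (fun s' => v x s') t := by
      simp_rw [div_eq_inv_mul]
      exact rlDeriv_const_mul n α s⁻¹ (fun s' => v x s') t
    rw [this, h2, hD1, ← hs2]
    field_simp
    ring
  · rw [rlDeriv_const_mul n α s (fun s' => u x s') t, h1, hD2, ← hs2]
    field_simp
    ring
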